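/- arXiv:1711.03158 — 2 statements merged into one kernel-verified Lean document; each statement's English description precedes it below -/
import Mathlib

section
/- Let (Ω, 𝒜, P) be a probability space, let X, Y be random variables with |X| ≤ M and |Y| ≤ M almost surely, and let E ∈ 𝒜 be an event with P(Eᶜ) ≤ 1/2 such that X and Y are independent conditionally on E, in the sense that E[XY·1_E]·P(E) = E[X·1_E]·E[Y·1_E]. Then |Cov(X, Y)| ≤ 12 M² P(Eᶜ). -/
open MeasureTheory ProbabilityTheory

set_option maxHeartbeats 1000000 in
/-- **Covariance bound under conditional independence.**
If `X, Y` are bounded by `M` a.s., `E` is an event with `P(Eᶜ) ≤ 1/2` on which `X` and `Y`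
are independent in the sense `E[XY·1_E]·P(E) = E[X·1_E]·E[Y·1_E]`, then
`|Cov(X,Y)| ≤ 12 M² P(Eᶜ)`. -/
theorem stmt_13
    {Ω : Type*} [MeasurableSpace Ω] (P : Measure Ω) [IsProbabilityMeasure P]
    (X Y : Ω → ℝ) (hX : Measurable X) (hY : Measurable Y)
    (M : ℝ)
    (hXM : ∀ᵐ ω ∂P, |X ω| ≤ M) (hYM : ∀ᵐ ω ∂P, |Y ω| ≤ M)
    (E : Set Ω) (hE : MeasurableSet E) (hEc : (P Eᶜ).toReal ≤ 1/2)
    (hInd : (∫ ω in E, X ω * Y ω ∂P) * (P E).toReal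
        = (∫ ω in E, X ω ∂P) * (∫ ω in E, Y ω ∂P)) :
    |(∫ ω, X ω * Y ω ∂P) - (∫ ω, X ω ∂P) * (∫ ω, Y ω ∂P)|
      ≤ 12 * M ^ 2 * (P Eᶜ).toReal := by
  obtain ⟨ω₀, hω₀, -⟩ := (hXM.and hYM).exists
  have hM0 : 0 ≤ M := le_trans (abs_nonneg _) hω₀
  have hXM' : ∀ᵐ ω ∂P, ‖X ω‖ ≤ M := by simpa [Real.norm_eq_abs] using hXM
  have hYM' : ∀ᵐ ω ∂P, ‖Y ω‖ ≤ M := by simpa [Real.norm_eq_abs] using hYM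
  have hXYM' : ∀ᵐ ω ∂P, ‖X ω * Y ω‖ ≤ M * M := by
    filter_upwards [hXM, hYM] with ω h1 h2
    rw [Real.norm_eq_abs, abs_mul]
    exact mul_le_mul h1 h2 (abs_nonneg _) hM0
  have hXi : Integrable X P :=
    ⟨hX.aestronglyMeasurable, HasFiniteIntegral.of_bounded hXM'⟩
  have hYi : Integrable Y P :=
    ⟨hY.aestronglyMeasurable, HasFiniteIntegral.of_bounded hYM'⟩
  have hXYi : Integrable (fun ω => X ω * Y ω) P :=
    ⟨(hX.mul hY).aestronglyMeasurable, HasFiniteIntegral.of_bounded hXYM'⟩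
  -- splits
  have hsplitXY : (∫ ω, X ω * Y ω ∂P)
      = (∫ ω in E, X ω * Y ω ∂P) + (∫ ω in Eᶜ, X ω * Y ω ∂P) :=
    (integral_add_compl hE hXYi).symm
  have hsplitX : (∫ ω, X ω ∂P) = (∫ ω in E, X ω ∂P) + (∫ ω in Eᶜ, X ω ∂P) :=
    (integral_add_compl hE hXi).symm
  have hsplitY : (∫ ω, Y ω ∂P) = (∫ ω in E, Y ω ∂P) + (∫ ω in Eᶜ, Y ω ∂P) :=
    (integral_add_compl hE hYi).symm
  set p : ℝ := (P Eᶜ).toReal with hp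
  set q : ℝ := (P E).toReal with hq
  have hp0 : 0 ≤ p := ENNReal.toReal_nonneg
  have hq0 : 0 ≤ q := ENNReal.toReal_nonneg
  have hpq : q + p = 1 := by
    rw [hp, hq, ← ENNReal.toReal_add (measure_ne_top _ _) (measure_ne_top _ _),
      measure_add_measure_compl hE]
    simp
  -- set integral bounds
  have bnd : ∀ (f : Ω → ℝ) (C : ℝ) (s : Set Ω), (∀ᵐ ω ∂P, ‖f ω‖ ≤ C) →
      |∫ ω in s, f ω ∂P| ≤ C * (P s).toReal := by
    intro f C s hf
    have := norm_integral_le_of_norm_le_const (μ := P.restrict s) (f := f) (C := C)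
      (ae_restrict_of_ae hf)
    simpa [Real.norm_eq_abs, Measure.restrict_apply_univ, Measure.real] using this
  have hA : |∫ ω in E, X ω * Y ω ∂P| ≤ M * M * q := bnd _ _ _ hXYM'
  have hB : |∫ ω in Eᶜ, X ω * Y ω ∂P| ≤ M * M * p := bnd _ _ _ hXYM'
  have ha : |∫ ω in E, X ω ∂P| ≤ M * q := bnd _ _ _ hXM'
  have ha' : |∫ ω in Eᶜ, X ω ∂P| ≤ M * p := bnd _ _ _ hXM'
  have hb : |∫ ω in E, Y ω ∂P| ≤ M * q := bnd _ _ _ hYM'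
  have hb' : |∫ ω in Eᶜ, Y ω ∂P| ≤ M * p := bnd _ _ _ hYM'
  set A := ∫ ω in E, X ω * Y ω ∂P
  set B := ∫ ω in Eᶜ, X ω * Y ω ∂P
  set a := ∫ ω in E, X ω ∂P
  set a' := ∫ ω in Eᶜ, X ω ∂P
  set b := ∫ ω in E, Y ω ∂P
  set b' := ∫ ω in Eᶜ, Y ω ∂P
  rw [hsplitXY, hsplitX, hsplitY]
  have key : A + B - (a + a') * (b + b') = A * p + B - a * b' - a' * b - a' * b' := by
    linear_combination hInd - A * hpq
  rw [key]
  have habs : |A * p + B - a * b' - a' * b - a' * b'|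
      ≤ |A| * p + |B| + |a| * |b'| + |a'| * |b| + |a'| * |b'| := by
    calc |A * p + B - a * b' - a' * b - a' * b'|
        ≤ |A * p + B - a * b' - a' * b| + |a' * b'| := abs_sub _ _
      _ ≤ |A * p + B - a * b'| + |a' * b| + |a' * b'| := by
          gcongr; exact abs_sub _ _
      _ ≤ |A * p + B| + |a * b'| + |a' * b| + |a' * b'| := by
          gcongr; exact abs_sub _ _
      _ ≤ |A| * p + |B| + |a| * |b'| + |a'| * |b| + |a'| * |b'| := by
          have h1 : |A * p + B| ≤ |A| * p + |B| := by
            calc |A * p + B| ≤ |A * p| + |B| := abs_add_le _ _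
              _ = |A| * p + |B| := by rw [abs_mul, abs_of_nonneg hp0]
          simp only [abs_mul]
          linarith
  refine habs.trans ?_
  have hq1 : q ≤ 1 := by linarith
  have hMM : (0:ℝ) ≤ M * M := mul_nonneg hM0 hM0
  have hAM : |A| ≤ M * M := hA.trans (by nlinarith)
  have t1 : |A| * p ≤ M * M * p := mul_le_mul_of_nonneg_right hAM hp0
  have haM : |a| ≤ M := ha.trans (by nlinarith)
  have hbM : |b| ≤ M := hb.trans (by nlinarith)
  have t3 : |a| * |b'| ≤ M * (M * p) :=
    mul_le_mul haM hb' (abs_nonneg _) hM0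
  have t4 : |a'| * |b| ≤ (M * p) * M :=
    mul_le_mul ha' hbM (abs_nonneg _) (by nlinarith)
  have t5 : |a'| * |b'| ≤ (M * p) * (M * p) :=
    mul_le_mul ha' hb' (abs_nonneg _) (by nlinarith)
  have t5' : (M * p) * (M * p) ≤ M * M * p := by nlinarith [mul_nonneg hMM hp0]
  have h12 : 5 * (M * M * p) ≤ 12 * M ^ 2 * p := by nlinarith [mul_nonneg hMM hp0]
  linarith [t1, hB, t3, t4, t5.trans t5', h12]
end

section
/- Let d ≥ 1 and 0 < β with β ≠ d. There exists a constant C = C(d, β) such that for all L ≥ 1, ∫₀^∞ ∫_{ℝ^d} |B_{ℓ+1}(z) ∩ Q_L|² dz (ℓ+1)^{−d−β−1} dℓ ≤ C L^{2d − (d∧β)}, where |·| denotes Lebesgue measure. -/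
open MeasureTheory Metric Set
open scoped ENNReal

/-- The cube `Q_L = [-L/2, L/2)^d` in `ℝ^d`. -/
def cubeL (d : ℕ) (L : ℝ) : Set (Fin d → ℝ) :=
  {y | ∀ i, -(L / 2) ≤ y i ∧ y i < L / 2}

lemma cubeL_eq (d : ℕ) (L : ℝ) :
    cubeL d L = Set.pi Set.univ (fun _ : Fin d => Set.Ico (-(L/2)) (L/2)) := by
  ext y; simp [cubeL, Set.mem_pi, Set.mem_Ico]

lemma measurableSet_cubeL (d : ℕ) (L : ℝ) : MeasurableSet (cubeL d L) := by
  rw [cubeL_eq]; exact MeasurableSet.univ_pi fun i => measurableSet_Ico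

lemma volume_cubeL (d : ℕ) (L : ℝ) : volume (cubeL d L) = ENNReal.ofReal L ^ d := by
  rw [cubeL_eq, volume_pi_pi]
  have : L / 2 - -(L/2) = L := by ring
  simp [Real.volume_Ico, this]

lemma inner_est (d : ℕ) (hd : 1 ≤ d) (L r : ℝ) (hL : 0 ≤ L) (hr : 0 ≤ r) :
    (∫ z : Fin d → ℝ, ((volume (Metric.ball z r ∩ cubeL d L)).toReal) ^ 2)
      ≤ min (r ^ d * (volume (Metric.ball (0 : Fin d → ℝ) 1)).toReal) (L ^ d)
        * (r ^ d * (volume (Metric.ball (0 : Fin d → ℝ) 1)).toReal * L ^ d) := by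
  classical
  haveI : Nonempty (Fin d) := ⟨⟨0, hd⟩⟩
  set E := (Fin d → ℝ)
  set Q := cubeL d L with hQ
  have hQm : MeasurableSet Q := measurableSet_cubeL d L
  have hQvol : volume Q = ENNReal.ofReal L ^ d := volume_cubeL d L
  have hQfin : volume Q ≠ ⊤ := by
    rw [hQvol]; exact (ENNReal.pow_ne_top ENNReal.ofReal_ne_top)
  have hBfin : volume (ball (0 : E) r) ≠ ⊤ := measure_ball_lt_top.ne
  -- the product set
  set s : Set (E × E) := {p | dist p.2 p.1 < r} ∩ {p | p.2 ∈ Q} with hs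
  have hsm : MeasurableSet s := by
    apply MeasurableSet.inter
    · exact (isOpen_lt (continuous_snd.dist continuous_fst) continuous_const).measurableSet
    · exact hQm.preimage measurable_snd
  have hsec : ∀ z : E, Prod.mk z ⁻¹' s = Metric.ball z r ∩ Q := by
    intro z; ext w; simp [hs, Metric.mem_ball]
  set φ : E → ℝ≥0∞ := fun z => volume (Metric.ball z r ∩ Q) with hφ
  have hφm : Measurable φ := by
    have := measurable_measure_prodMk_left (ν := (volume : Measure E)) hsm
    simpa [hsec] using this
  have hball : ∀ z : E, volume (ball z r) = volume (ball (0 : E) r) := fun z =>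
    Measure.addHaar_ball_center volume z r
  have hlint : ∫⁻ z, φ z = volume (ball (0 : E) r) * volume Q := by
    have h1 : (volume.prod (volume : Measure E)) s = ∫⁻ z, φ z := by
      rw [Measure.prod_apply hsm]
      exact lintegral_congr fun z => by rw [hsec z]
    have h2 : (volume.prod (volume : Measure E)) s
        = ∫⁻ w, volume ((fun z => (z, w)) ⁻¹' s) := Measure.prod_apply_symm hsm
    have hsec2 : ∀ w : E, ((fun z : E => (z, w)) ⁻¹' s)
        = if w ∈ Q then Metric.ball w r else (∅ : Set E) := by
      intro w
      by_cases hw : w ∈ Q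
      · ext z; simp [hs, hw, Metric.mem_ball, dist_comm]
      · ext z; simp [hs, hw]
    rw [← h1, h2]
    have : ∀ w : E, volume ((fun z : E => (z, w)) ⁻¹' s)
        = Q.indicator (fun _ => volume (ball (0 : E) r)) w := by
      intro w
      rw [hsec2 w]
      by_cases hw : w ∈ Q
      · simp [hw, hball w]
      · simp [hw]
    rw [lintegral_congr this, lintegral_indicator hQm]
    simp [mul_comm]
  -- pointwise bound
  set M : ℝ≥0∞ := min (volume (ball (0 : E) r)) (volume Q) with hM
  have hφle : ∀ z, φ z ≤ M := by
    intro z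
    refine le_min ?_ (measure_mono inter_subset_right)
    calc φ z ≤ volume (ball z r) := measure_mono inter_subset_left
      _ = volume (ball (0 : E) r) := hball z
  have hMfin : M ≠ ⊤ := by
    rw [hM]; exact (min_le_right _ _).trans_lt hQfin.lt_top |>.ne
  set ψ : E → ℝ := fun z => (φ z).toReal with hψ
  have hψint : Integrable ψ := by
    apply integrable_toReal_of_lintegral_ne_top hφm.aemeasurable
    rw [hlint]; exact ENNReal.mul_ne_top hBfin hQfin
  have hψval : ∫ z, ψ z = (volume (ball (0 : E) r) * volume Q).toReal := by
    rw [integral_toReal hφm.aemeasurable (ae_of_all _ fun z =>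
      (hφle z).trans_lt hMfin.lt_top), hlint]
  have key : (∫ z : E, ψ z ^ 2) ≤ M.toReal * ∫ z, ψ z := by
    rw [← integral_const_mul]
    refine integral_mono_of_nonneg (ae_of_all _ fun z => sq_nonneg _)
      (hψint.const_mul _) (ae_of_all _ fun z => ?_)
    have h1 : ψ z ≤ M.toReal := ENNReal.toReal_mono hMfin (hφle z)
    have h0 : 0 ≤ ψ z := ENNReal.toReal_nonneg
    calc ψ z ^ 2 = ψ z * ψ z := sq (ψ z) ▸ by ring
      _ ≤ M.toReal * ψ z := mul_le_mul_of_nonneg_right h1 h0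
  have hBval : (volume (ball (0 : E) r)).toReal = r ^ d
      * (volume (ball (0 : E) 1)).toReal := by
    rw [Measure.addHaar_ball volume (0 : E) hr, ENNReal.toReal_mul,
      ENNReal.toReal_ofReal (pow_nonneg hr _)]
    rw [show Module.finrank ℝ E = d from Module.finrank_fin_fun ℝ]
  have hQval : (volume Q).toReal = L ^ d := by
    rw [hQvol, ENNReal.toReal_pow, ENNReal.toReal_ofReal hL]
  have hMval : M.toReal = min (r ^ d * (volume (ball (0 : E) 1)).toReal) (L ^ d) := by
    rw [hM, ENNReal.toReal_min hBfin hQfin, hBval, hQval]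
  calc (∫ z : E, ((volume (Metric.ball z r ∩ cubeL d L)).toReal) ^ 2)
      = ∫ z : E, ψ z ^ 2 := rfl
    _ ≤ M.toReal * ∫ z, ψ z := key
    _ = min (r ^ d * (volume (ball (0 : E) 1)).toReal) (L ^ d)
        * (r ^ d * (volume (ball (0 : E) 1)).toReal * L ^ d) := by
        rw [hMval, hψval, ENNReal.toReal_mul, hBval, hQval]

/-- **Key analytic estimate for spatial averages.**
For `d ≥ 1` and `0 < β ≠ d` there is `C = C(d, β)` such that for all `L ≥ 1`,
`∫₀^∞ ∫_{ℝ^d} |B_{ℓ+1}(z) ∩ Q_L|² dz (ℓ+1)^{-d-β-1} dℓ ≤ C L^{2d - (d∧β)}`. -/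
theorem stmt_18 (d : ℕ) (hd : 1 ≤ d) (β : ℝ) (hβ : 0 < β) (hβd : β ≠ d) :
    ∃ C : ℝ, 0 < C ∧ ∀ L : ℝ, 1 ≤ L →
      (∫ ℓ in Set.Ioi (0 : ℝ),
          (∫ z : Fin d → ℝ,
            ((volume (Metric.ball z (ℓ + 1) ∩ cubeL d L)).toReal) ^ 2)
            * (ℓ + 1) ^ (-(d : ℝ) - β - 1))
        ≤ C * L ^ (2 * (d : ℝ) - min (d : ℝ) β) := by
  haveI : Nonempty (Fin d) := ⟨⟨0, hd⟩⟩
  set ω : ℝ := (volume (Metric.ball (0 : Fin d → ℝ) 1)).toReal with hωdef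
  have hω : 0 < ω :=
    ENNReal.toReal_pos (measure_ball_pos volume _ one_pos).ne' measure_ball_lt_top.ne
  set γ : ℝ := (d : ℝ) - β with hγdef
  have hγ : γ ≠ 0 := sub_ne_zero.mpr fun h => hβd h.symm
  have hγabs : 0 < |γ| := abs_pos.mpr hγ
  refine ⟨ω ^ 2 * ((2:ℝ) ^ |γ| + 1) / |γ| + ω / β, ?_, ?_⟩
  · have h1 : 0 < ω ^ 2 * ((2:ℝ) ^ |γ| + 1) / |γ| := by positivity
    have h2 : 0 < ω / β := div_pos hω hβ
    linarith
  intro L hL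
  have hL0 : (0:ℝ) < L := lt_of_lt_of_le one_pos hL
  set m : ℝ := min (d : ℝ) β with hm
  have hmβ : m ≤ β := min_le_right _ _
  set g1 : ℝ → ℝ := fun ℓ => ω ^ 2 * L ^ d * (ℓ + 1) ^ (γ - 1) with hg1
  set g2 : ℝ → ℝ := fun ℓ => ω * (L ^ d * L ^ d) * (ℓ + 1) ^ (-β - 1) with hg2
  -- integrability of the two comparison pieces
  have hint1 : IntegrableOn g1 (Set.Ioc 0 L) := by
    refine (ContinuousOn.integrableOn_Icc ?_).mono_set Set.Ioc_subset_Icc_self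
    refine continuousOn_const.mul (ContinuousOn.rpow_const ?_ fun x hx => Or.inl ?_)
    · exact (continuous_id.add continuous_const).continuousOn
    · have h1 := hx.1
      intro h; nlinarith [h1]
  have hemb : MeasurableEmbedding (fun x : ℝ => x + 1) :=
    (Homeomorph.addRight (1:ℝ)).isClosedEmbedding.measurableEmbedding
  have hmp : MeasurePreserving (fun x : ℝ => x + 1) volume volume :=
    measurePreserving_add_right volume 1
  have hpre : (fun x : ℝ => x + 1) ⁻¹' Set.Ioi (L + 1) = Set.Ioi L := by
    ext x
    simp only [Set.mem_preimage, Set.mem_Ioi]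
    constructor <;> intro <;> linarith
  have hint2' : IntegrableOn (fun x : ℝ => (x + 1) ^ (-β - 1)) (Set.Ioi L) := by
    have hbase : IntegrableOn (fun x : ℝ => x ^ (-β - 1)) (Set.Ioi (L + 1)) :=
      integrableOn_Ioi_rpow_of_lt (by linarith) (by linarith)
    have h := (hmp.integrableOn_comp_preimage hemb).mpr hbase
    rwa [hpre] at h
  have hint2 : IntegrableOn g2 (Set.Ici L) := by
    rw [integrableOn_Ici_iff_integrableOn_Ioi]
    exact hint2'.const_mul _
  have hind1 : Integrable ((Set.Ioc (0:ℝ) L).indicator g1) :=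
    hint1.integrable_indicator measurableSet_Ioc
  have hind2 : Integrable ((Set.Ici L).indicator g2) :=
    hint2.integrable_indicator measurableSet_Ici
  -- pointwise bound on (0, ∞)
  have hbound : ∀ ℓ ∈ Set.Ioi (0:ℝ),
      (∫ z : Fin d → ℝ, ((volume (Metric.ball z (ℓ + 1) ∩ cubeL d L)).toReal) ^ 2)
        * (ℓ + 1) ^ (-(d : ℝ) - β - 1)
      ≤ (Set.Ioc (0:ℝ) L).indicator g1 ℓ + (Set.Ici L).indicator g2 ℓ := by
    intro ℓ hℓ
    have hℓ0 : (0:ℝ) < ℓ := hℓ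
    have hr : (0:ℝ) < ℓ + 1 := by linarith
    have hrp : (0:ℝ) ≤ (ℓ + 1) ^ (-(d : ℝ) - β - 1) := Real.rpow_nonneg hr.le _
    have hinner := inner_est d hd L (ℓ + 1) hL0.le hr.le
    have hA : (0:ℝ) ≤ (ℓ + 1) ^ d * ω * L ^ d := by positivity
    have step1 : (∫ z : Fin d → ℝ,
          ((volume (Metric.ball z (ℓ + 1) ∩ cubeL d L)).toReal) ^ 2)
          * (ℓ + 1) ^ (-(d : ℝ) - β - 1)
        ≤ min ((ℓ + 1) ^ d * ω) (L ^ d) * ((ℓ + 1) ^ d * ω * L ^ d)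
          * (ℓ + 1) ^ (-(d : ℝ) - β - 1) :=
      mul_le_mul_of_nonneg_right hinner hrp
    rcases le_or_gt ℓ L with hcase | hcase
    · have hmem : ℓ ∈ Set.Ioc (0:ℝ) L := ⟨hℓ0, hcase⟩
      have h2 : ((ℓ + 1):ℝ) ^ d * (ℓ + 1) ^ d * (ℓ + 1) ^ (-(d : ℝ) - β - 1)
          = (ℓ + 1) ^ (γ - 1) := by
        rw [← Real.rpow_natCast (ℓ + 1) d, ← Real.rpow_add hr, ← Real.rpow_add hr]
        congr 1
        rw [hγdef]; ring
      have key : min ((ℓ + 1) ^ d * ω) (L ^ d) * ((ℓ + 1) ^ d * ω * L ^ d)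
          * (ℓ + 1) ^ (-(d : ℝ) - β - 1) ≤ g1 ℓ := by
        calc min ((ℓ + 1) ^ d * ω) (L ^ d) * ((ℓ + 1) ^ d * ω * L ^ d)
              * (ℓ + 1) ^ (-(d : ℝ) - β - 1)
            ≤ ((ℓ + 1) ^ d * ω) * ((ℓ + 1) ^ d * ω * L ^ d)
              * (ℓ + 1) ^ (-(d : ℝ) - β - 1) :=
            mul_le_mul_of_nonneg_right
              (mul_le_mul_of_nonneg_right (min_le_left _ _) hA) hrp
          _ = ω ^ 2 * L ^ d
              * ((ℓ + 1) ^ d * (ℓ + 1) ^ d * (ℓ + 1) ^ (-(d : ℝ) - β - 1)) := by ring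
          _ = g1 ℓ := by rw [h2]
      have hg2nn : 0 ≤ (Set.Ici L).indicator g2 ℓ := by
        apply Set.indicator_nonneg
        intro a ha
        have ha1 : (0:ℝ) ≤ a + 1 := by
          have : L ≤ a := ha
          linarith
        have : (0:ℝ) ≤ (a + 1) ^ (-β - 1) := Real.rpow_nonneg ha1 _
        have hLd : (0:ℝ) ≤ L ^ d := by positivity
        simp only [hg2]
        exact mul_nonneg (mul_nonneg hω.le (mul_nonneg hLd hLd)) this
      rw [Set.indicator_of_mem hmem]
      calc _ ≤ g1 ℓ := step1.trans key
        _ ≤ g1 ℓ + (Set.Ici L).indicator g2 ℓ := le_add_of_nonneg_right hg2nn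
    · have hmem : ℓ ∈ Set.Ici L := le_of_lt hcase
      have h2 : ((ℓ + 1):ℝ) ^ d * (ℓ + 1) ^ (-(d : ℝ) - β - 1)
          = (ℓ + 1) ^ (-β - 1) := by
        rw [← Real.rpow_natCast (ℓ + 1) d, ← Real.rpow_add hr]
        congr 1
        ring
      have key : min ((ℓ + 1) ^ d * ω) (L ^ d) * ((ℓ + 1) ^ d * ω * L ^ d)
          * (ℓ + 1) ^ (-(d : ℝ) - β - 1) ≤ g2 ℓ := by
        calc min ((ℓ + 1) ^ d * ω) (L ^ d) * ((ℓ + 1) ^ d * ω * L ^ d)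
              * (ℓ + 1) ^ (-(d : ℝ) - β - 1)
            ≤ (L ^ d) * ((ℓ + 1) ^ d * ω * L ^ d)
              * (ℓ + 1) ^ (-(d : ℝ) - β - 1) :=
            mul_le_mul_of_nonneg_right
              (mul_le_mul_of_nonneg_right (min_le_right _ _) hA) hrp
          _ = ω * (L ^ d * L ^ d)
              * ((ℓ + 1) ^ d * (ℓ + 1) ^ (-(d : ℝ) - β - 1)) := by ring
          _ = g2 ℓ := by rw [h2]
      have hg1nn : 0 ≤ (Set.Ioc (0:ℝ) L).indicator g1 ℓ := by
        apply Set.indicator_nonneg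
        intro a ha
        have ha1 : (0:ℝ) ≤ a + 1 := by
          have : (0:ℝ) < a := ha.1
          linarith
        have : (0:ℝ) ≤ (a + 1) ^ (γ - 1) := Real.rpow_nonneg ha1 _
        have hLd : (0:ℝ) ≤ L ^ d := by positivity
        simp only [hg1]
        exact mul_nonneg (mul_nonneg (sq_nonneg ω) hLd) this
      rw [Set.indicator_of_mem hmem]
      calc _ ≤ g2 ℓ := step1.trans key
        _ ≤ (Set.Ioc (0:ℝ) L).indicator g1 ℓ + g2 ℓ := le_add_of_nonneg_left hg1nn
  -- main comparison
  have main : (∫ ℓ in Set.Ioi (0 : ℝ),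
      (∫ z : Fin d → ℝ,
        ((volume (Metric.ball z (ℓ + 1) ∩ cubeL d L)).toReal) ^ 2)
        * (ℓ + 1) ^ (-(d : ℝ) - β - 1))
      ≤ (∫ ℓ in Set.Ioc (0:ℝ) L, g1 ℓ) + ∫ ℓ in Set.Ici L, g2 ℓ := by
    have step : (∫ ℓ in Set.Ioi (0 : ℝ),
        (∫ z : Fin d → ℝ,
          ((volume (Metric.ball z (ℓ + 1) ∩ cubeL d L)).toReal) ^ 2)
          * (ℓ + 1) ^ (-(d : ℝ) - β - 1))
        ≤ ∫ ℓ in Set.Ioi (0:ℝ),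
            ((Set.Ioc (0:ℝ) L).indicator g1 ℓ + (Set.Ici L).indicator g2 ℓ) := by
      refine integral_mono_of_nonneg ?_ ((hind1.add hind2).integrableOn) ?_
      · refine (ae_restrict_iff' measurableSet_Ioi).mpr (ae_of_all _ fun ℓ hℓ => ?_)
        have hℓ0 : (0:ℝ) < ℓ := hℓ
        exact mul_nonneg (integral_nonneg fun z => sq_nonneg _)
          (Real.rpow_nonneg (by linarith) _)
      · exact (ae_restrict_iff' measurableSet_Ioi).mpr (ae_of_all _ hbound)
    refine step.trans (le_of_eq ?_)
    have hIoc : Set.Ioi (0:ℝ) ∩ Set.Ioc 0 L = Set.Ioc 0 L :=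
      Set.inter_eq_right.mpr Set.Ioc_subset_Ioi_self
    have hIci : Set.Ioi (0:ℝ) ∩ Set.Ici L = Set.Ici L := by
      rw [Set.inter_eq_right]
      exact fun x hx => lt_of_lt_of_le hL0 hx
    rw [integral_add hind1.integrableOn hind2.integrableOn,
      setIntegral_indicator measurableSet_Ioc, setIntegral_indicator measurableSet_Ici,
      hIoc, hIci]
  -- value of the first integral
  have hK1val : (∫ ℓ in Set.Ioc (0:ℝ) L, (ℓ + 1) ^ (γ - 1))
      = ((L + 1) ^ γ - 1) / γ := by
    rw [← intervalIntegral.integral_of_le hL0.le,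
      intervalIntegral.integral_comp_add_right (fun x : ℝ => x ^ (γ - 1)) 1,
      show (0:ℝ) + 1 = 1 by norm_num,
      integral_rpow (Or.inr ⟨fun h => hγ (by linarith),
        Set.notMem_uIcc_of_lt one_pos (by linarith)⟩),
      show γ - 1 + 1 = γ by ring, Real.one_rpow]
  have hLd : (L:ℝ) ^ d = L ^ ((d:ℝ)) := (Real.rpow_natCast L d).symm
  have hK1bd : ((L + 1) ^ γ - 1) / γ ≤ ((2:ℝ) ^ |γ| + 1) / |γ| * L ^ ((d:ℝ) - m) := by
    rcases hγ.lt_or_gt with hneg | hpos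
    · have hmd : m = (d : ℝ) := min_eq_left (by rw [hγdef] at hneg; linarith)
      rw [show (d:ℝ) - m = 0 by rw [hmd]; ring, Real.rpow_zero, mul_one, abs_of_neg hneg]
      have h0 : (0:ℝ) ≤ (L + 1) ^ γ := Real.rpow_nonneg (by linarith) _
      have h2 : (0:ℝ) ≤ (2:ℝ) ^ (-γ) := Real.rpow_nonneg (by norm_num) _
      have hrew : ((L + 1) ^ γ - 1) / γ = (1 - (L + 1) ^ γ) / (-γ) := by
        rw [div_neg, ← neg_div, neg_sub]
      rw [hrew]
      exact (div_le_div_iff_of_pos_right (neg_pos.mpr hneg)).mpr (by linarith)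
    · have hmd : m = β := min_eq_right (by rw [hγdef] at hpos; linarith)
      have hdm : (d:ℝ) - m = γ := by rw [hmd]
      rw [hdm, abs_of_pos hpos]
      have hLγ : (0:ℝ) ≤ L ^ γ := Real.rpow_nonneg hL0.le _
      have he1 : (L + 1) ^ γ ≤ 2 ^ γ * L ^ γ := by
        rw [← Real.mul_rpow (by norm_num) hL0.le]
        exact Real.rpow_le_rpow (by linarith) (by linarith) hpos.le
      have h2γ : (0:ℝ) ≤ (2:ℝ) ^ γ := Real.rpow_nonneg (by norm_num) _
      rw [show ((2:ℝ) ^ γ + 1) / γ * L ^ γ = ((2 ^ γ + 1) * L ^ γ) / γ by ring]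
      exact (div_le_div_iff_of_pos_right hpos).mpr (by nlinarith)
  have hJ1 : (∫ ℓ in Set.Ioc (0:ℝ) L, g1 ℓ)
      ≤ ω ^ 2 * ((2:ℝ) ^ |γ| + 1) / |γ| * L ^ (2 * (d : ℝ) - m) := by
    have hIg1 : (∫ ℓ in Set.Ioc (0:ℝ) L, g1 ℓ)
        = ω ^ 2 * L ^ d * (((L + 1) ^ γ - 1) / γ) := by
      simp only [hg1]
      rw [integral_const_mul, hK1val]
    rw [hIg1]
    have hc : (0:ℝ) ≤ ω ^ 2 * L ^ d := by positivity
    calc ω ^ 2 * L ^ d * (((L + 1) ^ γ - 1) / γ)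
        ≤ ω ^ 2 * L ^ d * (((2:ℝ) ^ |γ| + 1) / |γ| * L ^ ((d:ℝ) - m)) :=
          mul_le_mul_of_nonneg_left hK1bd hc
      _ = ω ^ 2 * ((2:ℝ) ^ |γ| + 1) / |γ| * (L ^ ((d:ℝ)) * L ^ ((d:ℝ) - m)) := by
          rw [← hLd]; ring
      _ = ω ^ 2 * ((2:ℝ) ^ |γ| + 1) / |γ| * L ^ (2 * (d : ℝ) - m) := by
          rw [← Real.rpow_add hL0]
          congr 1
          ring
  -- value of the second integral
  have hK2val : (∫ ℓ in Set.Ioi L, (ℓ + 1) ^ (-β - 1)) = (L + 1) ^ (-β) / β := by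
    have h := hmp.setIntegral_preimage_emb hemb (fun x : ℝ => x ^ (-β - 1)) (Set.Ioi (L + 1))
    rw [hpre] at h
    rw [h, integral_Ioi_rpow_of_lt (by linarith) (by linarith),
      show -β - 1 + 1 = -β by ring, neg_div_neg_eq]
  have hJ2 : (∫ ℓ in Set.Ici L, g2 ℓ) ≤ ω / β * L ^ (2 * (d : ℝ) - m) := by
    rw [MeasureTheory.integral_Ici_eq_integral_Ioi]
    have hIg2 : (∫ ℓ in Set.Ioi L, g2 ℓ)
        = ω * (L ^ d * L ^ d) * ((L + 1) ^ (-β) / β) := by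
      simp only [hg2]
      rw [integral_const_mul, hK2val]
    rw [hIg2]
    have h1 : (L + 1) ^ (-β) ≤ L ^ (-β) :=
      Real.rpow_le_rpow_of_nonpos hL0 (by linarith) (by linarith)
    have hc : (0:ℝ) ≤ ω * (L ^ d * L ^ d) := by positivity
    calc ω * (L ^ d * L ^ d) * ((L + 1) ^ (-β) / β)
        ≤ ω * (L ^ d * L ^ d) * (L ^ (-β) / β) :=
          mul_le_mul_of_nonneg_left ((div_le_div_iff_of_pos_right hβ).mpr h1) hc
      _ = ω / β * (L ^ ((d:ℝ)) * L ^ ((d:ℝ)) * L ^ (-β)) := by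
          rw [← hLd]; ring
      _ = ω / β * L ^ (2 * (d : ℝ) - β) := by
          rw [← Real.rpow_add hL0, ← Real.rpow_add hL0]
          congr 1
          ring
      _ ≤ ω / β * L ^ (2 * (d : ℝ) - m) := by
          apply mul_le_mul_of_nonneg_left _ (by positivity)
          exact Real.rpow_le_rpow_of_exponent_le hL (by linarith)
  calc (∫ ℓ in Set.Ioi (0 : ℝ),
      (∫ z : Fin d → ℝ,
        ((volume (Metric.ball z (ℓ + 1) ∩ cubeL d L)).toReal) ^ 2)
        * (ℓ + 1) ^ (-(d : ℝ) - β - 1))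
      ≤ (∫ ℓ in Set.Ioc (0:ℝ) L, g1 ℓ) + ∫ ℓ in Set.Ici L, g2 ℓ := main
    _ ≤ ω ^ 2 * ((2:ℝ) ^ |γ| + 1) / |γ| * L ^ (2 * (d : ℝ) - m)
        + ω / β * L ^ (2 * (d : ℝ) - m) := add_le_add hJ1 hJ2
    _ = (ω ^ 2 * ((2:ℝ) ^ |γ| + 1) / |γ| + ω / β) * L ^ (2 * (d : ℝ) - m) := by ring
end
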